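/- arXiv:2508.00802 — 7 statements merged into one kernel-verified Lean document; each statement's English description precedes it below -/
import Mathlib

section
/- On ℝ³ with coordinates (x, y, p), for any constant c and any smooth functions u(x), v(y), the vector field Y = u(x) ∂_x + v(y) ∂_y + p (v'(y) − u'(x)) ∂_p satisfies L_Y(dy − p dx) = v'(y)·(dy − p dx) and L_Y(dy − c p dx) = v'(y)·(dy − c p dx); hence Y preserves both distributions ker(dy − p dx) and ker(dy − c p dx). -/
noncomputable section

/-- Functions of the three coordinates `(x, y, p)` on `ℝ³`. -/
abbrev F3 := ℝ → ℝ → ℝ → ℝ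

/-- Partial derivative in `x`. -/
def pdx (f : F3) (x y p : ℝ) : ℝ := deriv (fun t => f t y p) x
/-- Partial derivative in `y`. -/
def pdy (f : F3) (x y p : ℝ) : ℝ := deriv (fun t => f x t p) y
/-- Partial derivative in `p`. -/
def pdp (f : F3) (x y p : ℝ) : ℝ := deriv (fun t => f x y t) p

/-- Smoothness of a function of `(x, y, p)`. -/
def Smooth3 (f : F3) : Prop := ContDiff ℝ (⊤ : ℕ∞) (fun q : ℝ × ℝ × ℝ => f q.1 q.2.1 q.2.2)

/-- `dx`-component of the Lie derivative of the 1-form `a dx + b dy + c dp`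
along the vector field `u ∂x + v ∂y + w ∂p` (Cartan's formula in coordinates). -/
def lieX (u v w a b c : F3) : F3 := fun x y p =>
  u x y p * pdx a x y p + v x y p * pdy a x y p + w x y p * pdp a x y p
    + a x y p * pdx u x y p + b x y p * pdx v x y p + c x y p * pdx w x y p

/-- `dy`-component of the Lie derivative. -/
def lieY (u v w a b c : F3) : F3 := fun x y p =>
  u x y p * pdx b x y p + v x y p * pdy b x y p + w x y p * pdp b x y p
    + a x y p * pdy u x y p + b x y p * pdy v x y p + c x y p * pdy w x y p

/-- `dp`-component of the Lie derivative. -/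
def lieP (u v w a b c : F3) : F3 := fun x y p =>
  u x y p * pdx c x y p + v x y p * pdy c x y p + w x y p * pdp c x y p
    + a x y p * pdp u x y p + b x y p * pdp v x y p + c x y p * pdp w x y p

/-- The vector field `u ∂x + v ∂y + w ∂p` preserves the distribution
`ker (a dx + b dy + c dp)`: the Lie derivative of the 1-form is a function
multiple of the 1-form. -/
def Preserves (u v w a b c : F3) : Prop :=
  ∃ lam : F3, ∀ x y p : ℝ,
    lieX u v w a b c x y p = lam x y p * a x y p ∧
    lieY u v w a b c x y p = lam x y p * b x y p ∧
    lieP u v w a b c x y p = lam x y p * c x y p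

def alA : F3 := fun _ _ p => -p
def alB : F3 := fun _ _ _ => 1
def alC : F3 := fun _ _ _ => 0

/-- for a constant `c` and smooth `u(x), v(y)`, the vector field
`Y = u(x) ∂x + v(y) ∂y + p (v'(y) - u'(x)) ∂p` satisfies
`L_Y (dy - p dx) = v'(y) (dy - p dx)` and `L_Y (dy - c p dx) = v'(y) (dy - c p dx)`,
hence preserves both `ker (dy - p dx)` and `ker (dy - c p dx)`. -/
theorem symmetry_algebra_type_I1 (c : ℝ) (u v : ℝ → ℝ)
    (hu : ContDiff ℝ (⊤ : ℕ∞) u) (hv : ContDiff ℝ (⊤ : ℕ∞) v) :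
    (∀ x y p : ℝ,
      lieX (fun x _ _ => u x) (fun _ y _ => v y)
           (fun x y p => p * (deriv v y - deriv u x)) alA alB alC x y p
        = deriv v y * (-p) ∧
      lieY (fun x _ _ => u x) (fun _ y _ => v y)
           (fun x y p => p * (deriv v y - deriv u x)) alA alB alC x y p
        = deriv v y * 1 ∧
      lieP (fun x _ _ => u x) (fun _ y _ => v y)
           (fun x y p => p * (deriv v y - deriv u x)) alA alB alC x y p
        = deriv v y * 0) ∧
    (∀ x y p : ℝ,
      lieX (fun x _ _ => u x) (fun _ y _ => v y)
           (fun x y p => p * (deriv v y - deriv u x))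
           (fun _ _ p => -(c * p)) (fun _ _ _ => 1) (fun _ _ _ => 0) x y p
        = deriv v y * (-(c * p)) ∧
      lieY (fun x _ _ => u x) (fun _ y _ => v y)
           (fun x y p => p * (deriv v y - deriv u x))
           (fun _ _ p => -(c * p)) (fun _ _ _ => 1) (fun _ _ _ => 0) x y p
        = deriv v y * 1 ∧
      lieP (fun x _ _ => u x) (fun _ y _ => v y)
           (fun x y p => p * (deriv v y - deriv u x))
           (fun _ _ p => -(c * p)) (fun _ _ _ => 1) (fun _ _ _ => 0) x y p
        = deriv v y * 0) ∧
    Preserves (fun x _ _ => u x) (fun _ y _ => v y)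
           (fun x y p => p * (deriv v y - deriv u x)) alA alB alC ∧
    Preserves (fun x _ _ => u x) (fun _ y _ => v y)
           (fun x y p => p * (deriv v y - deriv u x))
           (fun _ _ p => -(c * p)) (fun _ _ _ => 1) (fun _ _ _ => 0) := by
  have h1 : ∀ p : ℝ, deriv (fun t : ℝ => -t) p = -1 := by
    intro p; simp
  have h2 : ∀ p : ℝ, deriv (fun t : ℝ => -(c * t)) p = -c := by
    intro p
    have h : HasDerivAt (fun t : ℝ => -(c * t)) (-(c * 1)) p :=
      ((hasDerivAt_id p).const_mul c).neg
    simpa using h.deriv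
  have key1 : ∀ x y p : ℝ,
      lieX (fun x _ _ => u x) (fun _ y _ => v y)
           (fun x y p => p * (deriv v y - deriv u x)) alA alB alC x y p
        = deriv v y * (-p) ∧
      lieY (fun x _ _ => u x) (fun _ y _ => v y)
           (fun x y p => p * (deriv v y - deriv u x)) alA alB alC x y p
        = deriv v y * 1 ∧
      lieP (fun x _ _ => u x) (fun _ y _ => v y)
           (fun x y p => p * (deriv v y - deriv u x)) alA alB alC x y p
        = deriv v y * 0 := by
    intro x y p
    refine ⟨?_, ?_, ?_⟩ <;>
      simp only [lieX, lieY, lieP, pdx, pdy, pdp, alA, alB, alC, deriv_const', h1] <;> ring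
  have key2 : ∀ x y p : ℝ,
      lieX (fun x _ _ => u x) (fun _ y _ => v y)
           (fun x y p => p * (deriv v y - deriv u x))
           (fun _ _ p => -(c * p)) (fun _ _ _ => 1) (fun _ _ _ => 0) x y p
        = deriv v y * (-(c * p)) ∧
      lieY (fun x _ _ => u x) (fun _ y _ => v y)
           (fun x y p => p * (deriv v y - deriv u x))
           (fun _ _ p => -(c * p)) (fun _ _ _ => 1) (fun _ _ _ => 0) x y p
        = deriv v y * 1 ∧
      lieP (fun x _ _ => u x) (fun _ y _ => v y)
           (fun x y p => p * (deriv v y - deriv u x))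
           (fun _ _ p => -(c * p)) (fun _ _ _ => 1) (fun _ _ _ => 0) x y p
        = deriv v y * 0 := by
    intro x y p
    refine ⟨?_, ?_, ?_⟩ <;>
      simp only [lieX, lieY, lieP, pdx, pdy, pdp, deriv_const', h2] <;> ring
  exact ⟨key1, key2, ⟨fun _ y _ => deriv v y, key1⟩, ⟨fun _ y _ => deriv v y, key2⟩⟩
end
end

section
/- On ℝ³ with coordinates (x, y, p), suppose u(x, y) is a smooth solution of u_{xx} + u_{yy} = c u_{xy} for a constant c, and v(x, y) is a smooth function with v_x = −u_y and v_y = u_x − c u_y. Then the vector field Y = u ∂_x + v ∂_y − u_y (1 + c p + p²) ∂_p preserves both distributions ker(dy − p dx) and ker((p + c) dy + dx), i.e. L_Y(dy − p dx) is a function multiple of dy − p dx and L_Y((p+c) dy + dx) is a function multiple of (p+c) dy + dx. -/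
noncomputable section

/-- Partial derivatives of functions of two variables `(x, y)`. -/
def pdx2 (f : ℝ → ℝ → ℝ) (x y : ℝ) : ℝ := deriv (fun t => f t y) x
def pdy2 (f : ℝ → ℝ → ℝ) (x y : ℝ) : ℝ := deriv (fun t => f x t) y

def Smooth2 (f : ℝ → ℝ → ℝ) : Prop := ContDiff ℝ (⊤ : ℕ∞) (fun q : ℝ × ℝ => f q.1 q.2)

lemma d2x (f : ℝ → ℝ → ℝ) (x y : ℝ) : deriv (fun t => f t y) x = pdx2 f x y := rfl
lemma d2y (f : ℝ → ℝ → ℝ) (x y : ℝ) : deriv (fun t => f x t) y = pdy2 f x y := rfl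

lemma pdx_of2 (f : ℝ → ℝ → ℝ) (x y p : ℝ) :
    pdx (fun x y _ => f x y) x y p = pdx2 f x y := rfl

lemma pdy_of2 (f : ℝ → ℝ → ℝ) (x y p : ℝ) :
    pdy (fun x y _ => f x y) x y p = pdy2 f x y := rfl

lemma pdp_of2 (f : ℝ → ℝ → ℝ) (x y p : ℝ) :
    pdp (fun x y _ => f x y) x y p = 0 := by simp [pdp]

/-- if `u(x,y)` solves `u_xx + u_yy = c u_xy` and `v` is conjugate
(`v_x = -u_y`, `v_y = u_x - c u_y`), then
`Y = u ∂x + v ∂y - u_y (1 + c p + p²) ∂p` preserves both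
`ker (dy - p dx)` and `ker ((p + c) dy + dx)`. -/
theorem symmetry_type_I2 (c : ℝ) (u v : ℝ → ℝ → ℝ)
    (hu : Smooth2 u) (hv : Smooth2 v)
    (hpde : ∀ x y : ℝ, pdx2 (pdx2 u) x y + pdy2 (pdy2 u) x y = c * pdy2 (pdx2 u) x y)
    (hvx : ∀ x y : ℝ, pdx2 v x y = -(pdy2 u x y))
    (hvy : ∀ x y : ℝ, pdy2 v x y = pdx2 u x y - c * pdy2 u x y) :
    Preserves (fun x y _ => u x y) (fun x y _ => v x y)
        (fun x y p => -(pdy2 u x y) * (1 + c * p + p ^ 2)) alA alB alC ∧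
    Preserves (fun x y _ => u x y) (fun x y _ => v x y)
        (fun x y p => -(pdy2 u x y) * (1 + c * p + p ^ 2))
        (fun _ _ _ => 1) (fun _ _ p => p + c) (fun _ _ _ => 0) := by
  have hd1 : ∀ q : ℝ, deriv (fun t : ℝ => t + c) q = 1 := by
    intro q; simp
  have hd2 : ∀ q : ℝ, deriv (fun t : ℝ => -t) q = -1 := by
    intro q; simp
  constructor
  · refine ⟨fun x y p => pdx2 u x y - (c + p) * pdy2 u x y, fun x y p => ?_⟩
    refine ⟨?_, ?_, ?_⟩ <;>
      simp only [lieX, lieY, lieP, alA, alB, alC, pdx, pdy, pdp] <;>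
      simp only [deriv_const, hd1, hd2, d2x, d2y, hvx, hvy] <;> ring
  · refine ⟨fun x y p => pdx2 u x y - (c + p) * pdy2 u x y, fun x y p => ?_⟩
    refine ⟨?_, ?_, ?_⟩ <;>
      simp only [lieX, lieY, lieP, pdx, pdy, pdp] <;>
      simp only [deriv_const, hd1, hd2, d2x, d2y, hvx, hvy] <;> ring
end
end

section
/- Let α = dy − p dx and α̃ = |f_p|^{-1/2} · sign(p − f) · (dy − f dx) on an open subset of ℝ³ where f = f(x, y, p) is smooth with f_p ≠ 0 and f ≠ p. Then α ∧ dα = ± α̃ ∧ dα̃ (with sign equal to the sign of f_p); i.e. α, α̃ are balanced contact forms. -/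
noncomputable section

/-- Components of the exterior derivative of the 1-form `a dx + b dy + c dp`
with respect to the basis `dy∧dp`, `dp∧dx`, `dx∧dy` of 2-forms. -/
def dYP (a b c : F3) : F3 := fun x y p => pdy c x y p - pdp b x y p
def dPX (a b c : F3) : F3 := fun x y p => pdp a x y p - pdx c x y p
def dXY (a b c : F3) : F3 := fun x y p => pdx b x y p - pdy a x y p

/-- Coefficient of `ω ∧ dω` with respect to `dx ∧ dy ∧ dp`, for the 1-form
`ω = a dx + b dy + c dp`. -/
def volForm (a b c : F3) : F3 := fun x y p =>
  a x y p * dYP a b c x y p + b x y p * dPX a b c x y p + c x y p * dXY a b c x y p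

/-- Components (in basis `dy∧dp, dp∧dx, dx∧dy`) of the wedge of two 1-forms. -/
def w2YP (a b c a' b' c' : F3) : F3 := fun x y p =>
  b x y p * c' x y p - c x y p * b' x y p
def w2PX (a b c a' b' c' : F3) : F3 := fun x y p =>
  c x y p * a' x y p - a x y p * c' x y p
def w2XY (a b c a' b' c' : F3) : F3 := fun x y p =>
  a x y p * b' x y p - b x y p * a' x y p

/-- Evaluation of the 1-form `a dx + b dy + c dp` on a tangent vector. -/
def evalForm (a b c : F3) (x y p : ℝ) (v : ℝ × ℝ × ℝ) : ℝ :=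
  a x y p * v.1 + b x y p * v.2.1 + c x y p * v.2.2

/-- with `α = dy - p dx` and
`α̃ = |f_p|^{-1/2} · sign(p - f) · (dy - f dx)` (for `f_p ≠ 0`, `f ≠ p`),
one has `α ∧ dα = ± α̃ ∧ dα̃` with sign equal to the sign of `f_p`:
the forms are balanced. -/
theorem balanced_contact_forms (f : F3) (hf : Smooth3 f)
    (hfp : ∀ x y p : ℝ, pdp f x y p ≠ 0)
    (hfne : ∀ x y p : ℝ, f x y p ≠ p) :
    ∀ x y p : ℝ,
      volForm alA alB alC x y p
        = Real.sign (pdp f x y p) *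
          volForm
            (fun x y p => |pdp f x y p| ^ (-(1/2) : ℝ) * Real.sign (p - f x y p) * (-(f x y p)))
            (fun x y p => |pdp f x y p| ^ (-(1/2) : ℝ) * Real.sign (p - f x y p))
            (fun _ _ _ => 0) x y p := by
  intro x y p
  set h : ℝ → ℝ := fun t => pdp f x y t with hh
  have hgd : ContDiff ℝ (⊤ : ℕ∞) (fun t : ℝ => f x y t) := by
    have : ContDiff ℝ (⊤ : ℕ∞) (fun t : ℝ => ((x, y, t) : ℝ × ℝ × ℝ)) :=
      contDiff_const.prodMk (contDiff_const.prodMk contDiff_id)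
    exact hf.comp this
  have hhd : Differentiable ℝ h := by
    have hgd' : ContDiff ℝ (⊤ : ℕ∞) (fun t : ℝ => f x y t) := hgd.of_le (by simp)
    have := (contDiff_infty_iff_deriv.mp hgd').2
    exact (contDiff_infty_iff_deriv.mp this).1
  have hhp : h p ≠ 0 := hfp x y p
  set b : ℝ → ℝ := fun t => |h t| ^ (-(1/2) : ℝ) * Real.sign (t - f x y t) with hb
  have hphi : DifferentiableAt ℝ (fun t => |h t| ^ (-(1/2) : ℝ)) p := by
    have habs : DifferentiableAt ℝ (fun t => |h t|) p :=
      (differentiableAt_abs hhp).comp p (hhd p)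
    have : |h p| ≠ 0 := by positivity
    exact (Real.differentiableAt_rpow_const_of_ne _ this).comp p habs
  have hu : ∀ t, t - f x y t ≠ 0 := fun t => sub_ne_zero.mpr (fun hcon => hfne x y t hcon.symm)
  have hucont : Continuous (fun t : ℝ => t - f x y t) :=
    continuous_id.sub hgd.continuous
  have hsloc : ∀ᶠ t in nhds p, Real.sign (t - f x y t) = Real.sign (p - f x y p) := by
    rcases lt_or_gt_of_ne (hu p) with hlt | hgt
    · have : ∀ᶠ t in nhds p, t - f x y t < 0 :=
        hucont.continuousAt.eventually_lt continuousAt_const hlt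
      filter_upwards [this] with t ht
      rw [Real.sign_of_neg ht, Real.sign_of_neg hlt]
    · have : ∀ᶠ t in nhds p, 0 < t - f x y t :=
        continuousAt_const.eventually_lt hucont.continuousAt hgt
      filter_upwards [this] with t ht
      rw [Real.sign_of_pos ht, Real.sign_of_pos hgt]
  have hbeq : b =ᶠ[nhds p] fun t => |h t| ^ (-(1/2) : ℝ) * Real.sign (p - f x y p) := by
    filter_upwards [hsloc] with t ht
    simp only [hb, ht]
  have hbd : DifferentiableAt ℝ b p :=
    (hphi.mul_const _).congr_of_eventuallyEq hbeq
  have hfd : DifferentiableAt ℝ (fun t : ℝ => f x y t) p := hgd.differentiable (by simp) p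
  have hLHS : volForm alA alB alC x y p = -1 := by
    simp [volForm, dYP, dPX, dXY, alA, alB, alC, pdx, pdy, pdp]
  rw [hLHS]
  have hpdpa : pdp (fun x y p => |pdp f x y p| ^ (-(1/2) : ℝ) * Real.sign (p - f x y p)
      * (-(f x y p))) x y p = deriv b p * (-(f x y p)) + b p * (-(h p)) := by
    show deriv (fun t => b t * (-(f x y t))) p = _
    rw [deriv_fun_mul hbd hfd.fun_neg, deriv.fun_neg]
    rfl
  have hpdpb : pdp (fun x y p => |pdp f x y p| ^ (-(1/2) : ℝ) * Real.sign (p - f x y p))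
      x y p = deriv b p := rfl
  have hconst : ∀ g : F3, (∀ x y p, g x y p = 0) → pdx g x y p = 0 ∧ pdy g x y p = 0 ∧
      pdp g x y p = 0 := by
    intro g hg
    refine ⟨?_, ?_, ?_⟩ <;> simp [pdx, pdy, pdp, hg]
  have hs2 : Real.sign (p - f x y p) * Real.sign (p - f x y p) = 1 := by
    rcases Real.sign_apply_eq_of_ne_zero _ (hu p) with h1 | h1 <;> rw [h1] <;> norm_num
  have habspos : (0:ℝ) < |h p| := abs_pos.mpr hhp
  have hbsq : b p * b p = |h p|⁻¹ := by
    have h2 : |h p| ^ (-(1/2) : ℝ) * |h p| ^ (-(1/2) : ℝ) = |h p|⁻¹ := by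
      rw [← Real.rpow_add habspos, show (-(1/2:ℝ)) + -(1/2) = -1 by norm_num,
        Real.rpow_neg_one]
    calc b p * b p
        = (|h p| ^ (-(1/2) : ℝ) * |h p| ^ (-(1/2) : ℝ))
          * (Real.sign (p - f x y p) * Real.sign (p - f x y p)) := by simp [hb]; ring
      _ = |h p|⁻¹ := by rw [h2, hs2, mul_one]
  have hsgnh : Real.sign (h p) * h p = |h p| := by
    rcases lt_or_gt_of_ne hhp with h1 | h1
    · rw [Real.sign_of_neg h1, abs_of_neg h1]; ring
    · rw [Real.sign_of_pos h1, abs_of_pos h1]; ring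
  show (-1 : ℝ) = Real.sign (pdp f x y p) * volForm _ _ _ x y p
  have hz := hconst (fun _ _ _ => (0:ℝ)) (fun _ _ _ => rfl)
  simp only [volForm, dYP, dPX, dXY, hz.1, hz.2.1, hz.2.2, hpdpa, hpdpb, zero_mul, add_zero,
    sub_zero, zero_sub]
  have hbp' : |h p| ^ (-(1/2):ℝ) * Real.sign (p - f x y p) = b p := rfl
  rw [hbp']
  have e2 : Real.sign (h p) * (-(b p * b p) * h p) = -1 := by
    rw [hbsq]
    have e3 : Real.sign (h p) * (-|h p|⁻¹ * h p) = -(|h p|⁻¹ * (Real.sign (h p) * h p)) := by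
      ring
    rw [e3, hsgnh, inv_mul_cancel₀ (ne_of_gt habspos)]
  have hhp' : pdp f x y p = h p := rfl
  rw [hhp']
  linear_combination -e2
end
end

section
/- With α = dy − p dx and α̃ = |f_p|^{-1/2} · sign(p−f) · (dy − f dx) on a region where f_p > 0 and p > f, the vector field X = ((p−f)/f_p^{1/2}) ∂_p satisfies i_X (α ∧ dα) = α ∧ α̃. -/
noncomputable section

/-- Interior product of the vector field `X1 ∂x + X2 ∂y + X3 ∂p` with the
3-form `F dx ∧ dy ∧ dp`, in the 2-form basis `dy∧dp, dp∧dx, dx∧dy`: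
it is `F·(X1, X2, X3)`. -/
def iota3YP (X1 _X2 _X3 F : F3) : F3 := fun x y p => F x y p * X1 x y p
def iota3PX (_X1 X2 _X3 F : F3) : F3 := fun x y p => F x y p * X2 x y p
def iota3XY (_X1 _X2 X3 F : F3) : F3 := fun x y p => F x y p * X3 x y p

/-- with `α = dy - p dx`, `α̃ = f_p^{-1/2}(dy - f dx)` on a region
where `f_p > 0` and `p > f`, the normalized vector field
`X = ((p - f)/f_p^{1/2}) ∂p` satisfies `i_X (α ∧ dα) = α ∧ α̃`. -/
theorem normalized_axis_field (f : F3) (hf : Smooth3 f)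
    (hfp : ∀ x y p : ℝ, 0 < pdp f x y p)
    (hfne : ∀ x y p : ℝ, f x y p < p) :
    ∀ x y p : ℝ,
      (iota3YP (fun _ _ _ => 0) (fun _ _ _ => 0)
          (fun x y p => (p - f x y p) / (pdp f x y p) ^ ((1/2 : ℝ)))
          (volForm alA alB alC) x y p
        = w2YP alA alB alC
            (fun x y p => (pdp f x y p) ^ (-(1/2) : ℝ) * (-(f x y p)))
            (fun x y p => (pdp f x y p) ^ (-(1/2) : ℝ))
            (fun _ _ _ => 0) x y p) ∧
      (iota3PX (fun _ _ _ => 0) (fun _ _ _ => 0)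
          (fun x y p => (p - f x y p) / (pdp f x y p) ^ ((1/2 : ℝ)))
          (volForm alA alB alC) x y p
        = w2PX alA alB alC
            (fun x y p => (pdp f x y p) ^ (-(1/2) : ℝ) * (-(f x y p)))
            (fun x y p => (pdp f x y p) ^ (-(1/2) : ℝ))
            (fun _ _ _ => 0) x y p) ∧
      (iota3XY (fun _ _ _ => 0) (fun _ _ _ => 0)
          (fun x y p => (p - f x y p) / (pdp f x y p) ^ ((1/2 : ℝ)))
          (volForm alA alB alC) x y p
        = w2XY alA alB alC
            (fun x y p => (pdp f x y p) ^ (-(1/2) : ℝ) * (-(f x y p)))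
            (fun x y p => (pdp f x y p) ^ (-(1/2) : ℝ))
            (fun _ _ _ => 0) x y p) := by
  intro x y p
  have hvol : volForm alA alB alC x y p = -1 := by
    simp [volForm, dYP, dPX, dXY, alA, alB, alC, pdx, pdy, pdp]
  have hg : (0:ℝ) < pdp f x y p := hfp x y p
  refine ⟨by simp [iota3YP, w2YP, alA, alB, alC], by simp [iota3PX, w2PX, alA, alB, alC], ?_⟩
  simp only [iota3XY, w2XY, alA, alB, alC, hvol]
  rw [Real.rpow_neg hg.le, div_eq_mul_inv]
  ring
end
end

section
/- Suppose on a 3-manifold M, Y is a vector field preserving both rank-2 distributions ξ = ker α and ξ̃ = ker α̃ (L_Y α = λ α, L_Y α̃ = μ α̃ for functions λ, μ), and suppose Y is everywhere transverse to the line field A = ξ ∩ ξ̃. Then the rank-2 distribution A ⊕ ⟨Y⟩ is integrable (involutive): for any vector field Z spanning A, the bracket [Z, Y] lies in A ⊕ ⟨Y⟩. -/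
noncomputable section

/-- Components of the Lie bracket `[V, W]` of vector fields on `ℝ³`. -/
def brX (u v w u' v' w' : F3) : F3 := fun x y p =>
  u x y p * pdx u' x y p + v x y p * pdy u' x y p + w x y p * pdp u' x y p
    - (u' x y p * pdx u x y p + v' x y p * pdy u x y p + w' x y p * pdp u x y p)
def brY (u v w u' v' w' : F3) : F3 := fun x y p =>
  u x y p * pdx v' x y p + v x y p * pdy v' x y p + w x y p * pdp v' x y p
    - (u' x y p * pdx v x y p + v' x y p * pdy v x y p + w' x y p * pdp v x y p)
def brP (u v w u' v' w' : F3) : F3 := fun x y p =>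
  u x y p * pdx w' x y p + v x y p * pdy w' x y p + w x y p * pdp w' x y p
    - (u' x y p * pdx w x y p + v' x y p * pdy w x y p + w' x y p * pdp w x y p)

section Aux

lemma diff_x (f : F3) (hf : Smooth3 f) (y p : ℝ) :
    Differentiable ℝ (fun t => f t y p) := by
  have h : ContDiff ℝ (⊤ : ℕ∞) (fun t : ℝ => ((t, y, p) : ℝ × ℝ × ℝ)) :=
    contDiff_id.prodMk contDiff_const
  exact (hf.comp h).differentiable (by simp)

lemma diff_y (f : F3) (hf : Smooth3 f) (x p : ℝ) :
    Differentiable ℝ (fun t => f x t p) := by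
  have h : ContDiff ℝ (⊤ : ℕ∞) (fun t : ℝ => ((x, t, p) : ℝ × ℝ × ℝ)) :=
    contDiff_const.prodMk (contDiff_id.prodMk contDiff_const)
  exact (hf.comp h).differentiable (by simp)

lemma diff_p (f : F3) (hf : Smooth3 f) (x y : ℝ) :
    Differentiable ℝ (fun t => f x y t) := by
  have h : ContDiff ℝ (⊤ : ℕ∞) (fun t : ℝ => ((x, y, t) : ℝ × ℝ × ℝ)) :=
    contDiff_const.prodMk (contDiff_const.prodMk contDiff_id)
  exact (hf.comp h).differentiable (by simp)

/-- derivative of an identically-vanishing combination `a Z1 + b Z2 + c Z3`. -/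
lemma zero_comb_deriv (a z : ℝ → ℝ) (b w : ℝ → ℝ) (c u : ℝ → ℝ)
    (ha : Differentiable ℝ a) (hz : Differentiable ℝ z)
    (hb : Differentiable ℝ b) (hw : Differentiable ℝ w)
    (hc : Differentiable ℝ c) (hu : Differentiable ℝ u)
    (h0 : ∀ t, a t * z t + b t * w t + c t * u t = 0) (x : ℝ) :
    deriv a x * z x + a x * deriv z x + (deriv b x * w x + b x * deriv w x)
      + (deriv c x * u x + c x * deriv u x) = 0 := by
  have e1 : deriv (fun t => a t * z t + b t * w t + c t * u t) x
      = deriv a x * z x + a x * deriv z x + (deriv b x * w x + b x * deriv w x)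
        + (deriv c x * u x + c x * deriv u x) := by
    rw [deriv_fun_add (((ha x).fun_mul (hz x)).fun_add ((hb x).fun_mul (hw x))) ((hc x).fun_mul (hu x)),
      deriv_fun_add ((ha x).fun_mul (hz x)) ((hb x).fun_mul (hw x)),
      deriv_fun_mul (ha x) (hz x), deriv_fun_mul (hb x) (hw x), deriv_fun_mul (hc x) (hu x)]
  have e2 : (fun t => a t * z t + b t * w t + c t * u t) = fun _ => (0 : ℝ) :=
    funext h0
  rw [e2, deriv_const] at e1
  linarith [e1]

/-- Key computation: if `Y` preserves `ker α` and `Z ∈ ker α`, then `α([Z,Y]) = 0`. -/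
lemma bracket_in_ker (a b c Y1 Y2 Y3 Z1 Z2 Z3 lam : F3)
    (ha : Smooth3 a) (hb : Smooth3 b) (hc : Smooth3 c)
    (hZ1 : Smooth3 Z1) (hZ2 : Smooth3 Z2) (hZ3 : Smooth3 Z3)
    (hL : ∀ x y p : ℝ,
      lieX Y1 Y2 Y3 a b c x y p = lam x y p * a x y p ∧
      lieY Y1 Y2 Y3 a b c x y p = lam x y p * b x y p ∧
      lieP Y1 Y2 Y3 a b c x y p = lam x y p * c x y p)
    (h0 : ∀ x y p : ℝ,
      a x y p * Z1 x y p + b x y p * Z2 x y p + c x y p * Z3 x y p = 0)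
    (x y p : ℝ) :
    a x y p * brX Z1 Z2 Z3 Y1 Y2 Y3 x y p
      + b x y p * brY Z1 Z2 Z3 Y1 Y2 Y3 x y p
      + c x y p * brP Z1 Z2 Z3 Y1 Y2 Y3 x y p = 0 := by
  have hx : pdx a x y p * Z1 x y p + a x y p * pdx Z1 x y p
      + (pdx b x y p * Z2 x y p + b x y p * pdx Z2 x y p)
      + (pdx c x y p * Z3 x y p + c x y p * pdx Z3 x y p) = 0 :=
    zero_comb_deriv (fun t => a t y p) (fun t => Z1 t y p) (fun t => b t y p)
      (fun t => Z2 t y p) (fun t => c t y p) (fun t => Z3 t y p)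
      (diff_x a ha y p) (diff_x Z1 hZ1 y p) (diff_x b hb y p) (diff_x Z2 hZ2 y p)
      (diff_x c hc y p) (diff_x Z3 hZ3 y p) (fun t => h0 t y p) x
  have hy : pdy a x y p * Z1 x y p + a x y p * pdy Z1 x y p
      + (pdy b x y p * Z2 x y p + b x y p * pdy Z2 x y p)
      + (pdy c x y p * Z3 x y p + c x y p * pdy Z3 x y p) = 0 :=
    zero_comb_deriv (fun t => a x t p) (fun t => Z1 x t p) (fun t => b x t p)
      (fun t => Z2 x t p) (fun t => c x t p) (fun t => Z3 x t p)
      (diff_y a ha x p) (diff_y Z1 hZ1 x p) (diff_y b hb x p) (diff_y Z2 hZ2 x p)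
      (diff_y c hc x p) (diff_y Z3 hZ3 x p) (fun t => h0 x t p) y
  have hp : pdp a x y p * Z1 x y p + a x y p * pdp Z1 x y p
      + (pdp b x y p * Z2 x y p + b x y p * pdp Z2 x y p)
      + (pdp c x y p * Z3 x y p + c x y p * pdp Z3 x y p) = 0 :=
    zero_comb_deriv (fun t => a x y t) (fun t => Z1 x y t) (fun t => b x y t)
      (fun t => Z2 x y t) (fun t => c x y t) (fun t => Z3 x y t)
      (diff_p a ha x y) (diff_p Z1 hZ1 x y) (diff_p b hb x y) (diff_p Z2 hZ2 x y)
      (diff_p c hc x y) (diff_p Z3 hZ3 x y) (fun t => h0 x y t) p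
  obtain ⟨l1, l2, l3⟩ := hL x y p
  simp only [lieX, lieY, lieP] at l1 l2 l3
  simp only [brX, brY, brP]
  linear_combination Z1 x y p * l1 + Z2 x y p * l2 + Z3 x y p * l3
    - Y1 x y p * hx - Y2 x y p * hy - Y3 x y p * hp + lam x y p * h0 x y p

end Aux

/-- if `Y` preserves both transverse rank-2 distributions
`ξ = ker α` and `ξ̃ = ker α̃` (in the sense `L_Y α = λ α`, `L_Y α̃ = μ α̃`),
`Z` is a nonvanishing vector field spanning the axis `A = ξ ∩ ξ̃`, and `Y` is
everywhere transverse to `A`, then `[Z, Y]` lies pointwise in the rank-2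
distribution `A ⊕ ⟨Y⟩`; hence `A ⊕ ⟨Y⟩` is involutive (integrable). -/
theorem symmetry_axis_integrable
    (a b c a' b' c' Y1 Y2 Y3 Z1 Z2 Z3 lam mu : F3)
    (ha : Smooth3 a) (hb : Smooth3 b) (hc : Smooth3 c)
    (ha' : Smooth3 a') (hb' : Smooth3 b') (hc' : Smooth3 c')
    (hY1 : Smooth3 Y1) (hY2 : Smooth3 Y2) (hY3 : Smooth3 Y3)
    (hZ1 : Smooth3 Z1) (hZ2 : Smooth3 Z2) (hZ3 : Smooth3 Z3)
    -- `Y` preserves `ξ = ker α` and `ξ̃ = ker α̃`: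
    (hLα : ∀ x y p : ℝ,
      lieX Y1 Y2 Y3 a b c x y p = lam x y p * a x y p ∧
      lieY Y1 Y2 Y3 a b c x y p = lam x y p * b x y p ∧
      lieP Y1 Y2 Y3 a b c x y p = lam x y p * c x y p)
    (hLα' : ∀ x y p : ℝ,
      lieX Y1 Y2 Y3 a' b' c' x y p = mu x y p * a' x y p ∧
      lieY Y1 Y2 Y3 a' b' c' x y p = mu x y p * b' x y p ∧
      lieP Y1 Y2 Y3 a' b' c' x y p = mu x y p * c' x y p)
    -- `Z` is nonvanishing and spans the line field `A = ξ ∩ ξ̃`: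
    (hZne : ∀ x y p : ℝ, (Z1 x y p, Z2 x y p, Z3 x y p) ≠ (0, 0, 0))
    (hAxis : ∀ x y p : ℝ, ∀ v : ℝ × ℝ × ℝ,
      (evalForm a b c x y p v = 0 ∧ evalForm a' b' c' x y p v = 0) ↔
      ∃ t : ℝ, v = (t * Z1 x y p, t * Z2 x y p, t * Z3 x y p))
    -- `Y` is everywhere transverse to the axis:
    (hYtrans : ∀ x y p : ℝ, ¬ ∃ t : ℝ,
      (Y1 x y p, Y2 x y p, Y3 x y p) = (t * Z1 x y p, t * Z2 x y p, t * Z3 x y p)) :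
    ∀ x y p : ℝ, ∃ s t : ℝ,
      brX Z1 Z2 Z3 Y1 Y2 Y3 x y p = s * Z1 x y p + t * Y1 x y p ∧
      brY Z1 Z2 Z3 Y1 Y2 Y3 x y p = s * Z2 x y p + t * Y2 x y p ∧
      brP Z1 Z2 Z3 Y1 Y2 Y3 x y p = s * Z3 x y p + t * Y3 x y p := by
  intro x y p
  have hZ0 : ∀ x y p : ℝ,
      evalForm a b c x y p (Z1 x y p, Z2 x y p, Z3 x y p) = 0 ∧
      evalForm a' b' c' x y p (Z1 x y p, Z2 x y p, Z3 x y p) = 0 := by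
    intro x y p
    exact (hAxis x y p _).mpr ⟨1, by simp⟩
  have h1 : evalForm a b c x y p
      (brX Z1 Z2 Z3 Y1 Y2 Y3 x y p, brY Z1 Z2 Z3 Y1 Y2 Y3 x y p,
        brP Z1 Z2 Z3 Y1 Y2 Y3 x y p) = 0 :=
    bracket_in_ker a b c Y1 Y2 Y3 Z1 Z2 Z3 lam ha hb hc hZ1 hZ2 hZ3 hLα
      (fun x y p => (hZ0 x y p).1) x y p
  have h2 : evalForm a' b' c' x y p
      (brX Z1 Z2 Z3 Y1 Y2 Y3 x y p, brY Z1 Z2 Z3 Y1 Y2 Y3 x y p,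
        brP Z1 Z2 Z3 Y1 Y2 Y3 x y p) = 0 :=
    bracket_in_ker a' b' c' Y1 Y2 Y3 Z1 Z2 Z3 mu ha' hb' hc' hZ1 hZ2 hZ3 hLα'
      (fun x y p => (hZ0 x y p).2) x y p
  obtain ⟨t, ht⟩ := (hAxis x y p _).mp ⟨h1, h2⟩
  rw [Prod.mk.injEq, Prod.mk.injEq] at ht
  obtain ⟨e1, e2, e3⟩ := ht
  exact ⟨t, 0, by rw [e1]; ring, by rw [e2]; ring, by rw [e3]; ring⟩
end
end

section
/- Let α, α̃ be 1-forms on a 3-manifold and X a vector field with α(X) = α̃(X) = 0, and suppose dα = h̃ α ∧ α̃ + α̃ ∧ β + g β ∧ α and dα̃ = h α ∧ α̃ + (I − g) α̃ ∧ β ± β ∧ α, where β is a 1-form with β(X) = 1 and h, h̃, g, I are functions. If ρ is a function satisfying X ρ = 1 + I ρ ± ρ², then the 1-form α + ρ α̃ satisfies (α + ρ α̃) ∧ d(α + ρ α̃) = 0; hence its kernel is an integrable rank-2 distribution containing X. -/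
noncomputable section

lemma diffx {f : F3} (hf : Smooth3 f) (y p : ℝ) :
    Differentiable ℝ (fun t => f t y p) := by
  have : (fun t => f t y p) = (fun q : ℝ × ℝ × ℝ => f q.1 q.2.1 q.2.2) ∘ (fun t => (t, y, p)) :=
    rfl
  rw [this]
  exact (hf.comp (contDiff_id.prodMk (contDiff_const.prodMk contDiff_const))).differentiable (by simp)

lemma diffy {f : F3} (hf : Smooth3 f) (x p : ℝ) :
    Differentiable ℝ (fun t => f x t p) := by
  have : (fun t => f x t p) = (fun q : ℝ × ℝ × ℝ => f q.1 q.2.1 q.2.2) ∘ (fun t => (x, t, p)) :=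
    rfl
  rw [this]
  exact (hf.comp (contDiff_const.prodMk (contDiff_id.prodMk contDiff_const))).differentiable (by simp)

lemma diffp {f : F3} (hf : Smooth3 f) (x y : ℝ) :
    Differentiable ℝ (fun t => f x y t) := by
  have : (fun t => f x y t) = (fun q : ℝ × ℝ × ℝ => f q.1 q.2.1 q.2.2) ∘ (fun t => (x, y, t)) :=
    rfl
  rw [this]
  exact (hf.comp (contDiff_const.prodMk (contDiff_const.prodMk contDiff_id))).differentiable (by simp)

lemma pdx_add_mul {f g r : F3} (hf : Smooth3 f) (hg : Smooth3 g) (hr : Smooth3 r)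
    (x y p : ℝ) :
    pdx (fun x y p => f x y p + r x y p * g x y p) x y p
      = pdx f x y p + pdx r x y p * g x y p + r x y p * pdx g x y p := by
  unfold pdx
  rw [deriv_fun_add ((diffx hf y p).differentiableAt)
      (((diffx hr y p).fun_mul (diffx hg y p)).differentiableAt),
    deriv_fun_mul ((diffx hr y p).differentiableAt) ((diffx hg y p).differentiableAt)]
  ring

lemma pdy_add_mul {f g r : F3} (hf : Smooth3 f) (hg : Smooth3 g) (hr : Smooth3 r)
    (x y p : ℝ) :
    pdy (fun x y p => f x y p + r x y p * g x y p) x y p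
      = pdy f x y p + pdy r x y p * g x y p + r x y p * pdy g x y p := by
  unfold pdy
  rw [deriv_fun_add ((diffy hf x p).differentiableAt)
      (((diffy hr x p).fun_mul (diffy hg x p)).differentiableAt),
    deriv_fun_mul ((diffy hr x p).differentiableAt) ((diffy hg x p).differentiableAt)]
  ring

lemma pdp_add_mul {f g r : F3} (hf : Smooth3 f) (hg : Smooth3 g) (hr : Smooth3 r)
    (x y p : ℝ) :
    pdp (fun x y p => f x y p + r x y p * g x y p) x y p
      = pdp f x y p + pdp r x y p * g x y p + r x y p * pdp g x y p := by
  unfold pdp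
  rw [deriv_fun_add ((diffp hf x y).differentiableAt)
      (((diffp hr x y).fun_mul (diffp hg x y)).differentiableAt),
    deriv_fun_mul ((diffp hr x y).differentiableAt) ((diffp hg x y).differentiableAt)]
  ring

/-- given 1-forms `α, α̃, β` forming a coframe, a vector field
`X` with `α(X) = α̃(X) = 0`, `β(X) = 1`, satisfying the structure equations
`dα = h̃ α∧α̃ + α̃∧β + g β∧α`, `dα̃ = h α∧α̃ + (I - g) α̃∧β ± β∧α`, and a
function `ρ` with `Xρ = 1 + Iρ ± ρ²`, the 1-form `θ = α + ρ α̃` satisfies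
`θ ∧ dθ = 0`; hence `ker θ` is an integrable rank-2 distribution containing
`X`. -/
theorem riccati_solution_gives_integrable_distribution
    (ε : ℝ) (hε : ε = 1 ∨ ε = -1)
    (a b c a' b' c' b1 b2 b3 X1 X2 X3 h ht g I ρ : F3)
    (ha : Smooth3 a) (hb : Smooth3 b) (hc : Smooth3 c)
    (ha' : Smooth3 a') (hb' : Smooth3 b') (hc' : Smooth3 c')
    (hb1 : Smooth3 b1) (hb2 : Smooth3 b2) (hb3 : Smooth3 b3)
    (hρ : Smooth3 ρ)
    -- `α, α̃, β` are pointwise linearly independent (a coframe):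
    (hcofr : ∀ x y p : ℝ,
      (Matrix.of ![![a x y p, b x y p, c x y p],
                   ![a' x y p, b' x y p, c' x y p],
                   ![b1 x y p, b2 x y p, b3 x y p]]).det ≠ 0)
    -- `α(X) = α̃(X) = 0` and `β(X) = 1`:
    (hαX : ∀ x y p : ℝ,
      evalForm a b c x y p (X1 x y p, X2 x y p, X3 x y p) = 0)
    (hα'X : ∀ x y p : ℝ,
      evalForm a' b' c' x y p (X1 x y p, X2 x y p, X3 x y p) = 0)
    (hβX : ∀ x y p : ℝ,
      evalForm b1 b2 b3 x y p (X1 x y p, X2 x y p, X3 x y p) = 1)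
    -- structure equation for `dα`:
    (hdα : ∀ x y p : ℝ,
      dYP a b c x y p = ht x y p * w2YP a b c a' b' c' x y p
          + w2YP a' b' c' b1 b2 b3 x y p + g x y p * w2YP b1 b2 b3 a b c x y p ∧
      dPX a b c x y p = ht x y p * w2PX a b c a' b' c' x y p
          + w2PX a' b' c' b1 b2 b3 x y p + g x y p * w2PX b1 b2 b3 a b c x y p ∧
      dXY a b c x y p = ht x y p * w2XY a b c a' b' c' x y p
          + w2XY a' b' c' b1 b2 b3 x y p + g x y p * w2XY b1 b2 b3 a b c x y p)
    -- structure equation for `dα̃`: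
    (hdα' : ∀ x y p : ℝ,
      dYP a' b' c' x y p = h x y p * w2YP a b c a' b' c' x y p
          + (I x y p - g x y p) * w2YP a' b' c' b1 b2 b3 x y p
          + ε * w2YP b1 b2 b3 a b c x y p ∧
      dPX a' b' c' x y p = h x y p * w2PX a b c a' b' c' x y p
          + (I x y p - g x y p) * w2PX a' b' c' b1 b2 b3 x y p
          + ε * w2PX b1 b2 b3 a b c x y p ∧
      dXY a' b' c' x y p = h x y p * w2XY a b c a' b' c' x y p
          + (I x y p - g x y p) * w2XY a' b' c' b1 b2 b3 x y p
          + ε * w2XY b1 b2 b3 a b c x y p)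
    -- the Riccati equation `Xρ = 1 + Iρ ± ρ²`:
    (hRic : ∀ x y p : ℝ,
      X1 x y p * pdx ρ x y p + X2 x y p * pdy ρ x y p + X3 x y p * pdp ρ x y p
        = 1 + I x y p * ρ x y p + ε * (ρ x y p) ^ 2) :
    (∀ x y p : ℝ,
      volForm (fun x y p => a x y p + ρ x y p * a' x y p)
              (fun x y p => b x y p + ρ x y p * b' x y p)
              (fun x y p => c x y p + ρ x y p * c' x y p) x y p = 0) ∧
    (∀ x y p : ℝ,
      evalForm (fun x y p => a x y p + ρ x y p * a' x y p)
               (fun x y p => b x y p + ρ x y p * b' x y p)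
               (fun x y p => c x y p + ρ x y p * c' x y p) x y p
        (X1 x y p, X2 x y p, X3 x y p) = 0) := by
  
  constructor
  · intro x y p
    obtain ⟨h1, h2, h3⟩ := hdα x y p
    obtain ⟨h1', h2', h3'⟩ := hdα' x y p
    have e1 := hαX x y p
    have e2 := hα'X x y p
    have e3 := hβX x y p
    have hr := hRic x y p
    simp only [dYP, dPX, dXY, w2YP, w2PX, w2XY] at h1 h2 h3 h1' h2' h3'
    simp only [evalForm] at e1 e2 e3
    simp only [volForm, dYP, dPX, dXY,
      pdx_add_mul ha ha' hρ, pdy_add_mul ha ha' hρ, pdp_add_mul ha ha' hρ,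
      pdx_add_mul hb hb' hρ, pdy_add_mul hb hb' hρ, pdp_add_mul hb hb' hρ,
      pdx_add_mul hc hc' hρ, pdy_add_mul hc hc' hρ, pdp_add_mul hc hc' hρ]
    linear_combination ((a x y p) + (ρ x y p)*(a' x y p)) * h1
      + ((b x y p) + (ρ x y p)*(b' x y p)) * h2
      + ((c x y p) + (ρ x y p)*(c' x y p)) * h3
      + (ρ x y p) * ((a x y p) + (ρ x y p)*(a' x y p)) * h1'
      + (ρ x y p) * ((b x y p) + (ρ x y p)*(b' x y p)) * h2'
      + (ρ x y p) * ((c x y p) + (ρ x y p)*(c' x y p)) * h3'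
      -  ((a x y p)*((b' x y p)*(b3 x y p) - (c' x y p)*(b2 x y p)) - (b x y p)*((a' x y p)*(b3 x y p) - (c' x y p)*(b1 x y p)) + (c x y p)*((a' x y p)*(b2 x y p) - (b' x y p)*(b1 x y p))) * hr
      + ((pdx ρ x y p)*((b' x y p)*(b3 x y p)-(c' x y p)*(b2 x y p)) + (pdy ρ x y p)*((c' x y p)*(b1 x y p)-(a' x y p)*(b3 x y p)) + (pdp ρ x y p)*((a' x y p)*(b2 x y p)-(b' x y p)*(b1 x y p))) * e1
      + ((pdx ρ x y p)*((c x y p)*(b2 x y p)-(b x y p)*(b3 x y p)) + (pdy ρ x y p)*((a x y p)*(b3 x y p)-(c x y p)*(b1 x y p)) + (pdp ρ x y p)*((b x y p)*(b1 x y p)-(a x y p)*(b2 x y p))) * e2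
      + ((pdx ρ x y p)*((b x y p)*(c' x y p)-(c x y p)*(b' x y p)) + (pdy ρ x y p)*((c x y p)*(a' x y p)-(a x y p)*(c' x y p)) + (pdp ρ x y p)*((a x y p)*(b' x y p)-(b x y p)*(a' x y p))) * e3
  · intro x y p
    have e1 := hαX x y p
    have e2 := hα'X x y p
    simp only [evalForm] at e1 e2 ⊢
    linear_combination e1 + ρ x y p * e2
end
end

section
/- On ℝ³ with coordinates (x, y, p), consider ξ = ker(dy − p dx) and ξ̃ = ker(dy − f dx) with f = f(x, y, p) smooth, f_p ≠ 0, f ≠ p. A vector field of the form u(x,y) ∂_x + v(x,y) ∂_y + w ∂_p with w = v_x + p v_y − p(u_x + p u_y) preserves ξ; it additionally preserves ξ̃ if and only if 0 = f(v_y − f u_y) − (v f_y + w f_p) + v_x − (f u)_x. -/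
noncomputable section

/-- The contact lift coefficient `w = v_x + p v_y - p (u_x + p u_y)`. -/
def liftW (u v : ℝ → ℝ → ℝ) : F3 := fun x y p =>
  pdx2 v x y + p * pdy2 v x y - p * (pdx2 u x y + p * pdy2 u x y)

/-- the contact lift `u ∂x + v ∂y + w ∂p` (with
`w = v_x + p v_y - p(u_x + p u_y)`) of a planar vector field preserves
`ξ = ker(dy - p dx)`; it additionally preserves `ξ̃ = ker(dy - f dx)` iff
`0 = f (v_y - f u_y) - (v f_y + w f_p) + v_x - (f u)_x`. -/
theorem contact_lift_symmetry (u v : ℝ → ℝ → ℝ) (f : F3)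
    (hu : ContDiff ℝ (⊤ : ℕ∞) (fun q : ℝ × ℝ => u q.1 q.2))
    (hv : ContDiff ℝ (⊤ : ℕ∞) (fun q : ℝ × ℝ => v q.1 q.2))
    (hf : Smooth3 f)
    (hfp : ∀ x y p : ℝ, pdp f x y p ≠ 0)
    (hfne : ∀ x y p : ℝ, f x y p ≠ p) :
    Preserves (fun x y _ => u x y) (fun x y _ => v x y) (liftW u v) alA alB alC ∧
    (Preserves (fun x y _ => u x y) (fun x y _ => v x y) (liftW u v)
        (fun x y p => -(f x y p)) (fun _ _ _ => 1) (fun _ _ _ => 0)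
      ↔ ∀ x y p : ℝ,
          0 = f x y p * (pdy2 v x y - f x y p * pdy2 u x y)
              - (v x y * pdy f x y p + liftW u v x y p * pdp f x y p)
              + pdx2 v x y
              - (pdx f x y p * u x y + f x y p * pdx2 u x y)) := by
  constructor
  · refine ⟨fun x y p => pdy2 v x y - p * pdy2 u x y, fun x y p => ?_⟩
    simp only [lieX, lieY, lieP, pdx, pdy, pdp, alA, alB, alC, liftW, pdx2, pdy2,
      deriv_const', deriv_neg, deriv_id'']
    refine ⟨by ring, by ring, by ring⟩
  · constructor
    · rintro ⟨lam, hlam⟩ x y p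
      obtain ⟨h1, h2, -⟩ := hlam x y p
      simp only [lieX, lieY, lieP, pdx, pdy, pdp, liftW, pdx2, pdy2,
        deriv_const', deriv.fun_neg] at h1 h2 ⊢
      linear_combination -h1 - f x y p * h2
    · intro h
      refine ⟨fun x y p => pdy2 v x y - f x y p * pdy2 u x y, fun x y p => ?_⟩
      have h1 := h x y p
      simp only [lieX, lieY, lieP, pdx, pdy, pdp, liftW, pdx2, pdy2,
        deriv_const', deriv.fun_neg] at h1 ⊢
      refine ⟨by linear_combination -h1, by ring, by ring⟩
end
end
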